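/- Let μ be a finite Borel measure on ℝ^d supported on a set E, such that liminf_{r→0} μ(B(x,r))/r^n ≤ C_* for all x ∈ E, and fix Λ > 2. Then for μ-a.e. x ∈ E there exists a sequence r_k → 0 with μ(B(x, Λ r_k)) ≤ 2Λ^d μ(B(x, r_k)) and μ(B(x, r_k)) ≤ 10 C_* Λ^n r_k^n. -/

import Mathlib

/-!
By Besicovitch's differentiation theorem, `μ`-almost every point `x` has positive lower
`d`-dimensional density: `μ(B(x,r)) ≥ c r^d` for small `r`. The hypothesis gives arbitrarily
small scales `s` with `μ(B(x,s)) ≤ 2C_* s^n`. For `n > d` these contradict the lower bound.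
For `n ≤ d`, suppose doubling failed at every small scale of density at most `2C_*Λ^n`.
Walking down the scales `s/Λ^j`, failure of doubling keeps the density below `2C_*` (as
`Λ^n ≤ 2Λ^d`) and forces `μ(B(x,s/Λ^j)) ≤ (2Λ^d)^{-j} μ(B(x,s))`, which beats the lower bound
`c (s/Λ^j)^d` by the factor `2^{-j}`.
-/

open MeasureTheory Metric Filter ENNReal

/-- The support of a measure: points all of whose balls have positive measure. -/
def measSupp {d : ℕ} (μ : Measure (EuclideanSpace ℝ (Fin d))) : Set (EuclideanSpace ℝ (Fin d)) :=
  {x | ∀ r : ℝ, 0 < r → 0 < μ (Metric.ball x r)}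

open scoped Topology NNReal
open Set

theorem Besicovitch.ae_eventually_mul_measure_closedBall_le {β : Type*} [MetricSpace β]
    [MeasurableSpace β] [BorelSpace β] [SecondCountableTopology β] [HasBesicovitchCovering β]
    (ρ μ : Measure β) [IsLocallyFiniteMeasure μ] [IsLocallyFiniteMeasure ρ] :
    ∀ᵐ x ∂μ, ∃ c : ℝ≥0, 0 < c ∧
      ∀ᶠ r in 𝓝[>] 0, (c : ℝ≥0∞) * ρ (closedBall x r) ≤ μ (closedBall x r) := by
  filter_upwards [Besicovitch.ae_tendsto_rnDeriv ρ μ, ρ.rnDeriv_lt_top μ] with x hx hfin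
  set M : ℝ≥0 := (ρ.rnDeriv μ x).toNNReal + 1
  have hM0 : 0 < M := by positivity
  have hM : ρ.rnDeriv μ x < M := by
    rw [← ENNReal.coe_toNNReal hfin.ne]
    exact_mod_cast lt_add_one _
  refine ⟨M⁻¹, inv_pos.2 hM0, ?_⟩
  filter_upwards [hx.eventually (gt_mem_nhds hM)] with r hr
  have hle : ρ (closedBall x r) ≤ M * μ (closedBall x r) :=
    (ENNReal.div_le_iff_le_mul (Or.inr coe_ne_top) (Or.inr (coe_ne_zero.2 hM0.ne'))).1 hr.le
  calc ((M⁻¹ : ℝ≥0) : ℝ≥0∞) * ρ (closedBall x r)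
      ≤ (M⁻¹ : ℝ≥0) * (M * μ (closedBall x r)) := by gcongr
    _ = μ (closedBall x r) := by
        rw [← mul_assoc, ← coe_mul, inv_mul_cancel₀ hM0.ne', ENNReal.coe_one, one_mul]

theorem ae_eventually_ofReal_mul_pow_finrank_le_measure_ball {E : Type*} [NormedAddCommGroup E]
    [NormedSpace ℝ E] [FiniteDimensional ℝ E] [MeasurableSpace E] [BorelSpace E]
    (μ : Measure E) [IsLocallyFiniteMeasure μ] :
    ∀ᵐ x ∂μ, ∃ c : ℝ, 0 < c ∧
      ∀ᶠ r in 𝓝[>] 0, ENNReal.ofReal (c * r ^ Module.finrank ℝ E) ≤ μ (ball x r) := by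
  set ν : Measure E := Measure.addHaar
  filter_upwards [Besicovitch.ae_eventually_mul_measure_closedBall_le ν μ] with x ⟨c, hc, hx⟩
  set k := Module.finrank ℝ E
  have hV : ν (ball 0 1) ≠ ∞ := measure_ball_lt_top.ne
  have hV0 : 0 < (ν (ball 0 1)).toReal := toReal_pos (measure_ball_pos _ _ one_pos).ne' hV
  refine ⟨c * (ν (ball 0 1)).toReal / 2 ^ k, by positivity, ?_⟩
  have hhalf : Tendsto (fun r : ℝ => r / 2) (𝓝[>] 0) (𝓝[>] 0) :=
    tendsto_nhdsWithin_iff.2 ⟨((continuous_id.div_const 2).tendsto' 0 0 (zero_div 2)).mono_left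
      nhdsWithin_le_nhds, eventually_nhdsWithin_of_forall fun r (hr : 0 < r) => half_pos hr⟩
  filter_upwards [hhalf.eventually hx, self_mem_nhdsWithin] with r hr (hr0 : 0 < r)
  calc ENNReal.ofReal (c * (ν (ball 0 1)).toReal / 2 ^ k * r ^ k)
      = ENNReal.ofReal c *
          (ENNReal.ofReal ((r / 2) ^ k) * ENNReal.ofReal (ν (ball 0 1)).toReal) := by
        rw [← ofReal_mul (by positivity), ← ofReal_mul (by positivity), div_pow]
        ring_nf
    _ = c * ν (closedBall x (r / 2)) := by
        rw [ofReal_toReal hV, ofReal_coe_nnreal, Measure.addHaar_closedBall ν x (by positivity)]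
    _ ≤ μ (closedBall x (r / 2)) := hr
    _ ≤ μ (ball x r) := measure_mono (closedBall_subset_ball (by linarith))

theorem exists_seq_pos_tendsto_zero_of_frequently {p : ℝ → Prop}
    (h : ∃ᶠ r in 𝓝[>] 0, p r) :
    ∃ r : ℕ → ℝ, (∀ k, 0 < r k) ∧ Tendsto r atTop (𝓝 0) ∧ ∀ k, p (r k) := by
  obtain ⟨r, hr, hp⟩ := frequently_iff_seq_forall.1 (h.and_eventually self_mem_nhdsWithin)
  exact ⟨r, fun k => (hp k).2, hr.mono_right nhdsWithin_le_nhds, fun k => (hp k).1⟩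

theorem frequently_le_ofReal_mul_pow_of_liminf_lt {f : ℝ → ℝ≥0∞} {n : ℕ} {K : ℝ}
    (h : liminf (fun r => f r / ENNReal.ofReal (r ^ n)) (𝓝[>] 0) < ENNReal.ofReal K) :
    ∃ᶠ r in 𝓝[>] 0, f r ≤ ENNReal.ofReal (K * r ^ n) := by
  have hK : 0 ≤ K := ofReal_pos.1 (h.trans_le' bot_le) |>.le
  refine ((frequently_lt_of_liminf_lt (by isBoundedDefault) h).and_eventually
    self_mem_nhdsWithin).mono fun r ⟨hr, (hr0 : 0 < r)⟩ => ?_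
  rw [ENNReal.div_lt_iff (Or.inl (by simpa using pow_pos hr0 n)) (Or.inl ofReal_ne_top)] at hr
  rw [ofReal_mul hK]
  exact hr.le

theorem eventually_mul_pow_lt_mul_pow {A c : ℝ} {d n : ℕ} (hc : 0 < c) (hdn : d < n) :
    ∀ᶠ r in 𝓝[>] 0, A * r ^ n < c * r ^ d := by
  have hlim : Tendsto (fun r : ℝ => A * r ^ (n - d)) (𝓝 0) (𝓝 0) := by
    simpa [Nat.sub_ne_zero_of_lt hdn] using ((continuous_pow (n - d)).const_mul A).tendsto 0
  filter_upwards [(hlim.eventually (gt_mem_nhds hc)).filter_mono nhdsWithin_le_nhds,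
    self_mem_nhdsWithin] with r hr (hr0 : 0 < r)
  calc A * r ^ n = A * r ^ (n - d) * r ^ d := by
        rw [mul_assoc, ← pow_add, Nat.sub_add_cancel hdn.le]
    _ < c * r ^ d := by gcongr

theorem Monotone.ofReal_pow_mul_apply_div_pow_le {f : ℝ → ℝ≥0∞} (hf : Monotone f)
    {A D Λ s : ℝ} {n : ℕ} (hA : 0 ≤ A) (hΛ : 1 ≤ Λ) (hD : Λ ^ n ≤ D) (hs : 0 < s)
    (hgrowth : ∀ ρ ∈ Ioc 0 s, f ρ ≤ ENNReal.ofReal (A * Λ ^ n * ρ ^ n) →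
      ENNReal.ofReal D * f ρ < f (Λ * ρ))
    (hstart : f s ≤ ENNReal.ofReal (A * s ^ n)) (j : ℕ) :
    ENNReal.ofReal (D ^ j) * f (s / Λ ^ j) ≤ f s := by
  have hD0 : 0 < D := (pow_pos (by linarith) n).trans_le hD
  -- The density bound is carried along the scales so that `hgrowth` applies at each of them.
  suffices ∀ j : ℕ, f (s / Λ ^ j) ≤ ENNReal.ofReal (A * (s / Λ ^ j) ^ n) ∧
      ENNReal.ofReal (D ^ j) * f (s / Λ ^ j) ≤ f s from (this j).2
  intro j
  induction j with
  | zero => simpa using hstart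
  | succ j ih =>
    set ρ := s / Λ ^ (j + 1)
    have hρ : Λ * ρ = s / Λ ^ j := by
      simp only [ρ, pow_succ]; field_simp
    have hρs : ρ ∈ Ioc 0 s := ⟨by positivity, div_le_self hs.le (one_le_pow₀ hΛ)⟩
    rw [← hρ] at ih
    have hρn : 0 ≤ A * ρ ^ n := mul_nonneg hA (pow_nonneg hρs.1.le n)
    have hΛρ : f (Λ * ρ) ≤ ENNReal.ofReal (A * Λ ^ n * ρ ^ n) :=
      ih.1.trans_eq (by rw [mul_pow, mul_assoc])
    have hgrow := hgrowth ρ hρs ((hf (le_mul_of_one_le_left hρs.1.le hΛ)).trans hΛρ)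
    constructor
    · have : ENNReal.ofReal D * f ρ ≤ ENNReal.ofReal D * ENNReal.ofReal (A * ρ ^ n) := by
        refine (hgrow.le.trans hΛρ).trans ?_
        rw [← ofReal_mul hD0.le]
        exact ofReal_le_ofReal (by nlinarith [mul_nonneg (sub_nonneg.2 hD) hρn])
      exact (ENNReal.mul_le_mul_iff_right (by simpa using hD0) ofReal_ne_top).1 this
    · calc ENNReal.ofReal (D ^ (j + 1)) * f ρ
            = ENNReal.ofReal (D ^ j) * (ENNReal.ofReal D * f ρ) := by
            rw [pow_succ, ofReal_mul (by positivity), mul_assoc]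
        _ ≤ ENNReal.ofReal (D ^ j) * f (Λ * ρ) := by gcongr
        _ ≤ f s := ih.2

theorem Monotone.frequently_doubling_of_eventually_ofReal_mul_pow_le {f : ℝ → ℝ≥0∞}
    (hf : Monotone f) {A c Λ : ℝ} {d n : ℕ} (hA : 0 ≤ A) (hc : 0 < c) (hΛ : 1 < Λ)
    (hlower : ∀ᶠ r in 𝓝[>] 0, ENNReal.ofReal (c * r ^ d) ≤ f r)
    (hsmall : ∃ᶠ r in 𝓝[>] 0, f r ≤ ENNReal.ofReal (A * r ^ n)) :
    ∃ᶠ r in 𝓝[>] 0, f (Λ * r) ≤ ENNReal.ofReal (2 * Λ ^ d) * f r ∧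
      f r ≤ ENNReal.ofReal (A * Λ ^ n * r ^ n) := by
  rcases lt_or_ge d n with hdn | hnd
  · obtain ⟨r, hfr, hcr, hlt, hr0 : 0 < r⟩ := (hsmall.and_eventually (hlower.and
      ((eventually_mul_pow_lt_mul_pow hc hdn).and self_mem_nhdsWithin))).exists
    exact absurd (hcr.trans hfr) (not_le.2 ((ofReal_lt_ofReal_iff (by positivity)).2 hlt))
  · by_contra hbad
    obtain ⟨ε, hε, hεsub⟩ :=
      mem_nhdsGT_iff_exists_Ioo_subset.1 (hlower.and (not_frequently.1 hbad))
    obtain ⟨s, hsA, hs⟩ := (hsmall.and_eventually (Ioo_mem_nhdsGT hε)).exists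
    have hD : Λ ^ n ≤ 2 * Λ ^ d :=
      (pow_le_pow_right₀ hΛ.le hnd).trans (le_mul_of_one_le_left (by positivity) one_le_two)
    have hdecay := hf.ofReal_pow_mul_apply_div_pow_le hA hΛ.le hD hs.1
      (fun ρ hρ hρA => not_le.1 fun h => (hεsub ⟨hρ.1, hρ.2.trans_lt hs.2⟩).2 ⟨h, hρA⟩)
      hsA
    obtain ⟨j, hj⟩ := pow_unbounded_of_one_lt (A * s ^ n / (c * s ^ d)) one_lt_two
    have hΛj : s / Λ ^ j ∈ Ioo 0 ε :=
      ⟨div_pos hs.1 (by positivity), (div_le_self hs.1.le (one_le_pow₀ hΛ.le)).trans_lt hs.2⟩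
    have key : ENNReal.ofReal (c * s ^ d * 2 ^ j) ≤ ENNReal.ofReal (A * s ^ n) :=
      calc ENNReal.ofReal (c * s ^ d * 2 ^ j)
          = ENNReal.ofReal ((2 * Λ ^ d) ^ j) * ENNReal.ofReal (c * (s / Λ ^ j) ^ d) := by
            have : (Λ ^ j) ^ d ≠ 0 := by positivity
            rw [← ofReal_mul (by positivity), mul_pow, ← pow_mul, mul_comm d j, pow_mul,
              div_pow]
            field_simp
        _ ≤ ENNReal.ofReal ((2 * Λ ^ d) ^ j) * f (s / Λ ^ j) := by gcongr; exact (hεsub hΛj).1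
        _ ≤ f s := hdecay j
        _ ≤ ENNReal.ofReal (A * s ^ n) := hsA
    rw [ofReal_le_ofReal_iff (mul_nonneg hA (pow_nonneg hs.1.le n))] at key
    rw [div_lt_iff₀ (mul_pos hc (pow_pos hs.1 d))] at hj
    linarith

/-- Lemma 5.1: if `μ` is a finite Borel measure with
`liminf_{r→0} μ(B(x,r))/r^n ≤ C_*` for every `x` in the support `E`, and `Λ > 2`, then for
`μ`-a.e. `x ∈ E` there is a sequence `r_k → 0` of positive radii with
`μ(B(x,Λr_k)) ≤ 2Λ^d μ(B(x,r_k))` and `μ(B(x,r_k)) ≤ 10 C_* Λ^n r_k^n`. -/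
theorem doubling_scales_with_density_bound (d n : ℕ)
    (μ : Measure (EuclideanSpace ℝ (Fin d))) [IsFiniteMeasure μ]
    (Cstar : ℝ) (hCstar : 0 < Cstar) (Λ : ℝ) (hΛ : 2 < Λ)
    (hlow : ∀ x ∈ measSupp μ,
      liminf (fun r : ℝ => μ (Metric.ball x r) / ENNReal.ofReal (r ^ n))
        (nhdsWithin 0 (Set.Ioi 0)) ≤ ENNReal.ofReal Cstar) :
    ∀ᵐ x ∂μ, x ∈ measSupp μ →
      ∃ r : ℕ → ℝ, (∀ k, 0 < r k) ∧ Tendsto r atTop (nhds 0) ∧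
        (∀ k, μ (Metric.ball x (Λ * r k)) ≤ ENNReal.ofReal (2 * Λ ^ d) * μ (Metric.ball x (r k))) ∧
        (∀ k, μ (Metric.ball x (r k)) ≤ ENNReal.ofReal (10 * Cstar * Λ ^ n * r k ^ n)) := by
  filter_upwards [ae_eventually_ofReal_mul_pow_finrank_le_measure_ball μ]
    with x ⟨c, hc, hlower⟩ hx
  rw [finrank_euclideanSpace_fin] at hlower
  have hsmall := frequently_le_ofReal_mul_pow_of_liminf_lt ((hlow x hx).trans_lt
    ((ofReal_lt_ofReal_iff (by positivity)).2 (by linarith : Cstar < 2 * Cstar)))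
  have hmono : Monotone fun r => μ (ball x r) := fun _ _ h => measure_mono (ball_subset_ball h)
  obtain ⟨r, hr0, hr, hgood⟩ := exists_seq_pos_tendsto_zero_of_frequently
    (hmono.frequently_doubling_of_eventually_ofReal_mul_pow_le (by positivity : 0 ≤ 2 * Cstar) hc
      (by linarith : 1 < Λ) hlower hsmall)
  refine ⟨r, hr0, hr, fun k => (hgood k).1, fun k => (hgood k).2.trans (ofReal_le_ofReal ?_)⟩
  nlinarith [mul_pos hCstar (mul_pos (pow_pos (by linarith : 0 < Λ) n) (pow_pos (hr0 k) n))]
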